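/- Let d, L ∈ ℕ, let a : ℤ^d → ℂ be 2L-periodic in each coordinate, and let M ∈ (0,∞) be such that the local variation satisfies lvar(a,k) ≤ M for every k ∈ ℤ^d. Then the total variation satisfies var(a) ≤ 4^d · M. -/

import Mathlib

/-- real dyadic intervals -/
noncomputable def Dr (l : ℤ) : Set ℝ :=
  if 1 ≤ l then Set.Ico ((2:ℝ) ^ (l-1)) ((2:ℝ) ^ l)
  else if l = 0 then Set.Ioo (-1) 1
  else Set.Ioc (-(2:ℝ) ^ (-l)) (-(2:ℝ) ^ (-l-1))

/-- lattice points of `D(l) ∩ I_L` -/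
noncomputable def DzL (l : ℤ) (L : ℕ) : Finset ℤ :=
  @Finset.filter _ (fun ν => ((ν:ℝ) ∈ Dr l)) (Classical.decPred _)
    (Finset.Icc (-(L:ℤ) + 1) (L:ℤ))

/-- remove the largest element -/
def dropMax (s : Finset ℤ) : Finset ℤ := s.filter (fun ν => (ν : WithBot ℤ) ≠ s.max)

/-- mixed sum/sup aggregation: coordinate `0` is outermost; over coordinates
with `α = true` we sum over the first family of domains, over coordinates with
`α = false` we take a supremum over the second family. -/
noncomputable def mixedAgg : (m : ℕ) → (Fin m → Bool) → (Fin m → Finset ℤ) →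
    (Fin m → Finset ℤ) → ((Fin m → ℤ) → ℝ) → ℝ
  | 0, _, _, _, f => f Fin.elim0
  | m+1, α, sd, pd, f =>
    if α 0 then
      ∑ ν ∈ sd 0, mixedAgg m (fun i => α i.succ) (fun i => sd i.succ)
        (fun i => pd i.succ) (fun r => f (Fin.cons ν r))
    else
      sSup ((fun ν => mixedAgg m (fun i => α i.succ) (fun i => sd i.succ)
        (fun i => pd i.succ) (fun r => f (Fin.cons ν r))) '' (pd 0 : Set ℤ))

/-- mixed difference `Δ_1^{α_1} ⋯ Δ_m^{α_m} a` -/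
noncomputable def mixedDiff (m : ℕ) (α : Fin m → Bool)
    (a : (Fin m → ℤ) → ℂ) (x : Fin m → ℤ) : ℂ :=
  ∑ T ∈ (Finset.univ.filter fun i => α i).powerset,
    (-1:ℂ) ^ ((Finset.univ.filter fun i => α i).card - T.card) *
      a (x + fun i => if i ∈ T then 1 else 0)

/-- one term of the total variation -/
noncomputable def varExpr (m L : ℕ) (a : (Fin m → ℤ) → ℂ)
    (k : Fin m → ℤ) (α : Fin m → Bool) : ℝ :=
  mixedAgg m α (fun j => DzL (k j) L) (fun j => DzL (k j) L)
    (fun ν => ‖mixedDiff m α a ν‖)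

/-- one term of the local variation -/
noncomputable def lvarExpr (m L : ℕ) (a : (Fin m → ℤ) → ℂ)
    (k : Fin m → ℤ) (α : Fin m → Bool) : ℝ :=
  mixedAgg m α (fun j => dropMax (DzL (k j) L)) (fun j => DzL (k j) L)
    (fun ν => ‖mixedDiff m α a ν‖)

/-!
Induction on the dimension, peeling off the first coordinate. A supremum coordinate passes
directly to the slices `a(ν, ·)`. For a summation coordinate, the sum over `D(k₁) ∩ I_L` is the
sum without its largest element `μ`, which is a term of the local variation, plus the single
difference `a(μ + 1, ·) - a(μ, ·)`, bounded through the slices at `μ` and at `μ + 1`; by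
periodicity `μ + 1` may be moved back into `I_L`, where it lies in some dyadic interval. These
choices do not depend on the slice, so each coordinate triples the number of local-variation
terms needed, and `var(a) ≤ 3^d M ≤ 4^d M`.
-/

open Finset

lemma sum_powerset_map {α β M : Type*} [AddCommMonoid M] (f : α ↪ β) (s : Finset α)
    (F : Finset β → M) : ∑ T ∈ (s.map f).powerset, F T = ∑ T ∈ s.powerset, F (T.map f) := by
  refine (sum_bij (fun T _ => T.map f) (fun T hT => ?_) (fun _ _ _ _ h => map_injective f h)
    (fun T hT => ?_) fun _ _ => rfl).symm
  · exact mem_powerset.2 (map_subset_map.2 (mem_powerset.1 hT))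
  · obtain ⟨U, hU, rfl⟩ := subset_map_iff.1 (mem_powerset.1 hT)
    exact ⟨U, mem_powerset.2 hU, rfl⟩

section MixedDiff

variable {m : ℕ}

def sliceAt {β : Type*} (a : (Fin (m + 1) → ℤ) → β) (ν : ℤ) : (Fin m → ℤ) → β :=
  fun s => a (Fin.cons ν s)

lemma Fin.cons_add_cons {β : Type*} [Add β] (x y : β) (v w : Fin m → β) :
    (Fin.cons x v + Fin.cons y w : Fin (m + 1) → β) = Fin.cons (x + y) (v + w) :=
  Matrix.cons_add_cons x v y w

lemma indicator_map_succEmb (T : Finset (Fin m)) :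
    (fun i => if i ∈ T.map (Fin.succEmb m) then (1 : ℤ) else 0)
      = Fin.cons 0 (fun j => if j ∈ T then 1 else 0) := by
  funext i
  cases i using Fin.cases <;> simp [Fin.succ_ne_zero]

lemma indicator_insert_zero_map_succEmb (T : Finset (Fin m)) :
    (fun i => if i ∈ insert 0 (T.map (Fin.succEmb m)) then (1 : ℤ) else 0)
      = Fin.cons 1 (fun j => if j ∈ T then 1 else 0) := by
  funext i
  cases i using Fin.cases <;> simp [Fin.succ_ne_zero]

lemma filter_fin_succ_of_false {α : Fin (m + 1) → Bool} (hα : α 0 = false) :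
    univ.filter (fun i => α i) = (univ.filter fun j => Fin.tail α j).map (Fin.succEmb m) := by
  ext i
  cases i using Fin.cases
  · simp [hα]
  · simp
    rfl

lemma filter_fin_succ_of_true {α : Fin (m + 1) → Bool} (hα : α 0 = true) :
    univ.filter (fun i => α i)
      = insert 0 ((univ.filter fun j => Fin.tail α j).map (Fin.succEmb m)) := by
  ext i
  cases i using Fin.cases
  · simp [hα]
  · simp
    rfl

lemma mixedDiff_sub (α : Fin m → Bool) (F G : (Fin m → ℤ) → ℂ) (x : Fin m → ℤ) :
    mixedDiff m α (F - G) x = mixedDiff m α F x - mixedDiff m α G x := by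
  simp only [mixedDiff, Pi.sub_apply, mul_sub, sum_sub_distrib]

lemma mixedDiff_cons_of_false {α : Fin (m + 1) → Bool} (hα : α 0 = false)
    (a : (Fin (m + 1) → ℤ) → ℂ) (ν : ℤ) (r : Fin m → ℤ) :
    mixedDiff (m + 1) α a (Fin.cons ν r) = mixedDiff m (Fin.tail α) (sliceAt a ν) r := by
  rw [mixedDiff, filter_fin_succ_of_false hα, sum_powerset_map]
  simp only [card_map, indicator_map_succEmb, Fin.cons_add_cons, add_zero]
  rfl

lemma mixedDiff_cons_of_true {α : Fin (m + 1) → Bool} (hα : α 0 = true)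
    (a : (Fin (m + 1) → ℤ) → ℂ) (ν : ℤ) (r : Fin m → ℤ) :
    mixedDiff (m + 1) α a (Fin.cons ν r)
      = mixedDiff m (Fin.tail α) (sliceAt a (ν + 1) - sliceAt a ν) r := by
  set S := univ.filter fun j => Fin.tail α j
  have h0 : (0 : Fin (m + 1)) ∉ S.map (Fin.succEmb m) := by simp [Fin.succ_ne_zero]
  rw [mixedDiff_sub, mixedDiff, mixedDiff, mixedDiff, filter_fin_succ_of_true hα,
    sum_powerset_insert h0, sum_powerset_map, sum_powerset_map, card_insert_of_notMem h0,
    add_comm, sub_eq_add_neg, ← sum_neg_distrib, ← sum_add_distrib, ← sum_add_distrib]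
  refine sum_congr rfl fun T hT => ?_
  have hT : T.card ≤ S.card := card_le_card (mem_powerset.1 hT)
  have hT0 : (0 : Fin (m + 1)) ∉ T.map (Fin.succEmb m) := by simp [Fin.succ_ne_zero]
  rw [card_insert_of_notMem hT0, indicator_insert_zero_map_succEmb, indicator_map_succEmb,
    Fin.cons_add_cons, Fin.cons_add_cons, card_map, card_map,
    show S.card + 1 - T.card = S.card - T.card + 1 by omega, Nat.add_sub_add_right, pow_succ]
  simp only [sliceAt, add_zero, S]
  ring

end MixedDiff

section MixedAgg

variable {m : ℕ} {α : Fin (m + 1) → Bool} (sd pd : Fin (m + 1) → Finset ℤ)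

lemma mixedAgg_succ_of_true (hα : α 0 = true) (f : (Fin (m + 1) → ℤ) → ℝ) :
    mixedAgg (m + 1) α sd pd f
      = ∑ ν ∈ sd 0, mixedAgg m (Fin.tail α) (Fin.tail sd) (Fin.tail pd) (sliceAt f ν) := by
  rw [mixedAgg, if_pos hα]
  rfl

lemma mixedAgg_succ_of_false (hα : α 0 = false) (f : (Fin (m + 1) → ℤ) → ℝ) :
    mixedAgg (m + 1) α sd pd f
      = sSup ((fun ν => mixedAgg m (Fin.tail α) (Fin.tail sd) (Fin.tail pd) (sliceAt f ν)) ''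
          (pd 0 : Set ℤ)) := by
  rw [mixedAgg, if_neg (by simp [hα])]
  rfl

lemma mixedAgg_norm_mixedDiff_succ_of_true (hα : α 0 = true) (a : (Fin (m + 1) → ℤ) → ℂ) :
    mixedAgg (m + 1) α sd pd (fun x => ‖mixedDiff (m + 1) α a x‖)
      = ∑ ν ∈ sd 0, mixedAgg m (Fin.tail α) (Fin.tail sd) (Fin.tail pd)
          (fun r => ‖mixedDiff m (Fin.tail α) (sliceAt a (ν + 1) - sliceAt a ν) r‖) := by
  rw [mixedAgg_succ_of_true sd pd hα]
  exact sum_congr rfl fun ν _ => congrArg _ <| funext fun r =>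
    congrArg norm (mixedDiff_cons_of_true hα a ν r)

lemma mixedAgg_norm_mixedDiff_succ_of_false (hα : α 0 = false) (a : (Fin (m + 1) → ℤ) → ℂ) :
    mixedAgg (m + 1) α sd pd (fun x => ‖mixedDiff (m + 1) α a x‖)
      = sSup ((fun ν => mixedAgg m (Fin.tail α) (Fin.tail sd) (Fin.tail pd)
          (fun r => ‖mixedDiff m (Fin.tail α) (sliceAt a ν) r‖)) '' (pd 0 : Set ℤ)) := by
  rw [mixedAgg_succ_of_false sd pd hα]
  congr 2 with ν
  exact congrArg _ <| funext fun r => congrArg norm (mixedDiff_cons_of_false hα a ν r)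

end MixedAgg

lemma le_sSup_image_finset {ι β : Type*} [ConditionallyCompleteLattice β] {f : ι → β}
    {s : Finset ι} {i : ι} (hi : i ∈ s) : f i ≤ sSup (f '' s) :=
  le_csSup (s.finite_toSet.image f).bddAbove ⟨i, hi, rfl⟩

lemma mixedAgg_nonneg {m : ℕ} (α : Fin m → Bool) (sd pd : Fin m → Finset ℤ)
    {f : (Fin m → ℤ) → ℝ} (hf : 0 ≤ f) : 0 ≤ mixedAgg m α sd pd f := by
  induction m with
  | zero => exact hf _
  | succ m ih =>
    cases hα : α 0
    · rw [mixedAgg_succ_of_false sd pd hα]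
      exact Real.sSup_nonneg (by rintro _ ⟨ν, -, rfl⟩; exact ih _ _ _ fun r => hf _)
    · rw [mixedAgg_succ_of_true sd pd hα]
      exact sum_nonneg fun ν _ => ih _ _ _ fun r => hf _

lemma mixedAgg_le_add {m : ℕ} (α : Fin m → Bool) (sd pd : Fin m → Finset ℤ)
    {f g h : (Fin m → ℤ) → ℝ} (hfgh : f ≤ g + h) (hg : 0 ≤ g) (hh : 0 ≤ h) :
    mixedAgg m α sd pd f ≤ mixedAgg m α sd pd g + mixedAgg m α sd pd h := by
  induction m with
  | zero => exact hfgh _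
  | succ m ih =>
    have ih' (ν : ℤ) := ih (Fin.tail α) (Fin.tail sd) (Fin.tail pd)
      (f := sliceAt f ν) (g := sliceAt g ν) (h := sliceAt h ν)
      (fun r => hfgh _) (fun r => hg _) (fun r => hh _)
    cases hα : α 0
    · simp only [mixedAgg_succ_of_false sd pd hα]
      refine Real.sSup_le ?_ (add_nonneg (Real.sSup_nonneg ?_) (Real.sSup_nonneg ?_))
      · rintro _ ⟨ν, hν, rfl⟩
        exact (ih' ν).trans <| add_le_add
          (le_sSup_image_finset (f := fun μ => mixedAgg m _ _ _ (sliceAt g μ)) hν)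
          (le_sSup_image_finset (f := fun μ => mixedAgg m _ _ _ (sliceAt h μ)) hν)
      · rintro _ ⟨ν, -, rfl⟩
        exact mixedAgg_nonneg _ _ _ fun r => hg _
      · rintro _ ⟨ν, -, rfl⟩
        exact mixedAgg_nonneg _ _ _ fun r => hh _
    · simp only [mixedAgg_succ_of_true sd pd hα, ← sum_add_distrib]
      exact sum_le_sum fun ν _ => ih' ν

lemma exists_two_zpow_le_lt {r : ℝ} (hr : 1 ≤ r) :
    ∃ e : ℤ, 0 ≤ e ∧ 2 ^ e ≤ r ∧ r < 2 ^ (e + 1) := by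
  refine ⟨Int.log 2 r, ?_, ?_, ?_⟩
  · simpa using Int.log_mono_right (b := 2) one_pos hr
  · exact_mod_cast Int.zpow_log_le_self (R := ℝ) (b := 2) one_lt_two (by linarith)
  · exact_mod_cast Int.lt_zpow_succ_log_self (R := ℝ) (b := 2) one_lt_two r

lemma exists_intCast_mem_Dr (n : ℤ) : ∃ l, (n : ℝ) ∈ Dr l := by
  rcases lt_trichotomy n 0 with hn | rfl | hn
  · obtain ⟨e, he, hle, hlt⟩ := exists_two_zpow_le_lt (r := -n) (by
      rw [← Int.cast_neg]; exact_mod_cast Int.neg_pos_of_neg hn)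
    refine ⟨-(e + 1), ?_⟩
    rw [Dr, if_neg (by omega), if_neg (by omega), neg_neg, add_sub_cancel_right]
    constructor <;> linarith
  · exact ⟨0, by norm_num [Dr]⟩
  · obtain ⟨e, he, hle, hlt⟩ := exists_two_zpow_le_lt (r := n) (by exact_mod_cast hn)
    refine ⟨e + 1, ?_⟩
    rw [Dr, if_pos (by omega), add_sub_cancel_right]
    exact ⟨hle, hlt⟩

noncomputable def dyadicIndex (n : ℤ) : ℤ := (exists_intCast_mem_Dr n).choose

lemma intCast_mem_Dr_dyadicIndex (n : ℤ) : (n : ℝ) ∈ Dr (dyadicIndex n) :=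
  (exists_intCast_mem_Dr n).choose_spec

lemma mem_DzL {l : ℤ} {L : ℕ} {ν : ℤ} :
    ν ∈ DzL l L ↔ (-(L : ℤ) + 1 ≤ ν ∧ ν ≤ L) ∧ (ν : ℝ) ∈ Dr l := by
  simp [DzL]

lemma dropMax_eq_erase {s : Finset ℤ} (hs : s.Nonempty) : dropMax s = s.erase (s.max' hs) := by
  ext ν
  simp [dropMax, ← coe_max' hs, and_comm]

section Periodic

variable {m : ℕ}

def IsPeriodic2L (L : ℕ) (a : (Fin m → ℤ) → ℂ) : Prop :=
  ∀ (k : Fin m → ℤ) (i : Fin m), a (k + (2 * L) • Pi.single i 1) = a k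

variable {L : ℕ}

lemma IsPeriodic2L.sub {a b : (Fin m → ℤ) → ℂ} (ha : IsPeriodic2L L a) (hb : IsPeriodic2L L b) :
    IsPeriodic2L L (a - b) :=
  fun k i => by simp only [Pi.sub_apply, ha k i, hb k i]

lemma IsPeriodic2L.sliceAt {a : (Fin (m + 1) → ℤ) → ℂ} (ha : IsPeriodic2L L a) (ν : ℤ) :
    IsPeriodic2L L (sliceAt a ν) := by
  intro k i
  have : (Fin.cons ν (k + (2 * L) • Pi.single i 1) : Fin (m + 1) → ℤ)
      = Fin.cons ν k + (2 * L) • Pi.single i.succ 1 := by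
    ext j
    cases j using Fin.cases <;> simp [Pi.single_apply]
  simp only [_root_.sliceAt, this]
  exact ha _ _

lemma IsPeriodic2L.sliceAt_sub {a : (Fin (m + 1) → ℤ) → ℂ} (ha : IsPeriodic2L L a) (ν : ℤ) :
    _root_.sliceAt a (ν - 2 * L) = _root_.sliceAt a ν := by
  funext s
  have : (Fin.cons ν s : Fin (m + 1) → ℤ) = Fin.cons (ν - 2 * L) s + (2 * L) • Pi.single 0 1 := by
    ext j
    cases j using Fin.cases <;> simp
  simp only [_root_.sliceAt, this]
  exact (ha _ _).symm

end Periodic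

def shiftIntoIL (L : ℕ) (n : ℤ) : ℤ := if (L : ℤ) < n then n - 2 * L else n

lemma IsPeriodic2L.sliceAt_shiftIntoIL {m L : ℕ} {a : (Fin (m + 1) → ℤ) → ℂ}
    (ha : IsPeriodic2L L a) (n : ℤ) :
    _root_.sliceAt a (shiftIntoIL L n) = _root_.sliceAt a n := by
  unfold shiftIntoIL
  split_ifs
  exacts [ha.sliceAt_sub n, rfl]

noncomputable def nextDyadicIndex (L : ℕ) (l : ℤ) : ℤ :=
  dyadicIndex (shiftIntoIL L ((DzL l L).max.unbotD 0 + 1))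

lemma shiftIntoIL_max'_add_one_mem_DzL {L : ℕ} {l : ℤ} (hs : (DzL l L).Nonempty) :
    shiftIntoIL L ((DzL l L).max' hs + 1) ∈ DzL (nextDyadicIndex L l) L := by
  have hmax := (mem_DzL.1 (max'_mem _ hs)).1
  rw [nextDyadicIndex, ← coe_max' hs, WithBot.unbotD_coe]
  refine mem_DzL.2 ⟨?_, intCast_mem_Dr_dyadicIndex _⟩
  unfold shiftIntoIL
  split_ifs <;> omega

section LocalVariationTerms

variable {m : ℕ} (L : ℕ)

/- The local-variation terms indexed by `γ : Fin m → Fin 3`: in a summation coordinate `j`,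
`γ j = 0` keeps it, while `γ j = 1` and `γ j = 2` turn it into a supremum over `D(k j)`, resp.
over the dyadic interval of the point after `max D(k j)` (moved back into `I_L`). -/

def lvarPattern (α : Fin m → Bool) (γ : Fin m → Fin 3) : Fin m → Bool :=
  fun j => α j && decide (γ j = 0)

noncomputable def lvarIndex (k : Fin m → ℤ) (α : Fin m → Bool) (γ : Fin m → Fin 3) :
    Fin m → ℤ :=
  fun j => if α j ∧ γ j = 2 then nextDyadicIndex L (k j) else k j

noncomputable def lvarSum (a : (Fin m → ℤ) → ℂ) (k : Fin m → ℤ) (α : Fin m → Bool) : ℝ :=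
  ∑ γ : Fin m → Fin 3, lvarExpr m L a (lvarIndex L k α γ) (lvarPattern α γ)

end LocalVariationTerms

section Unfolding

variable {m L : ℕ} {α : Fin (m + 1) → Bool} (a : (Fin (m + 1) → ℤ) → ℂ) (k : Fin (m + 1) → ℤ)

lemma varExpr_succ_of_true (hα : α 0 = true) :
    varExpr (m + 1) L a k α = ∑ ν ∈ DzL (k 0) L,
      varExpr m L (sliceAt a (ν + 1) - sliceAt a ν) (Fin.tail k) (Fin.tail α) :=
  mixedAgg_norm_mixedDiff_succ_of_true _ _ hα a

lemma varExpr_succ_of_false (hα : α 0 = false) :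
    varExpr (m + 1) L a k α =
      sSup ((fun ν => varExpr m L (sliceAt a ν) (Fin.tail k) (Fin.tail α)) ''
        (DzL (k 0) L : Set ℤ)) :=
  mixedAgg_norm_mixedDiff_succ_of_false _ _ hα a

lemma lvarExpr_succ_of_true (hα : α 0 = true) :
    lvarExpr (m + 1) L a k α = ∑ ν ∈ dropMax (DzL (k 0) L),
      lvarExpr m L (sliceAt a (ν + 1) - sliceAt a ν) (Fin.tail k) (Fin.tail α) :=
  mixedAgg_norm_mixedDiff_succ_of_true _ _ hα a

lemma lvarExpr_succ_of_false (hα : α 0 = false) :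
    lvarExpr (m + 1) L a k α =
      sSup ((fun ν => lvarExpr m L (sliceAt a ν) (Fin.tail k) (Fin.tail α)) ''
        (DzL (k 0) L : Set ℤ)) :=
  mixedAgg_norm_mixedDiff_succ_of_false _ _ hα a

end Unfolding

section Estimates

variable {m L : ℕ}

lemma lvarExpr_nonneg (a : (Fin m → ℤ) → ℂ) (k : Fin m → ℤ) (α : Fin m → Bool) :
    0 ≤ lvarExpr m L a k α :=
  mixedAgg_nonneg _ _ _ fun _ => norm_nonneg _

lemma lvarSum_nonneg (a : (Fin m → ℤ) → ℂ) (k : Fin m → ℤ) (α : Fin m → Bool) :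
    0 ≤ lvarSum L a k α :=
  sum_nonneg fun _ _ => lvarExpr_nonneg _ _ _

lemma varExpr_sub_le (F G : (Fin m → ℤ) → ℂ) (k : Fin m → ℤ) (α : Fin m → Bool) :
    varExpr m L (F - G) k α ≤ varExpr m L F k α + varExpr m L G k α :=
  mixedAgg_le_add _ _ _ (fun x => by
    simp only [Pi.add_apply, mixedDiff_sub]
    exact norm_sub_le _ _)
    (fun _ => norm_nonneg _) (fun _ => norm_nonneg _)

lemma lvarSum_succ (a : (Fin (m + 1) → ℤ) → ℂ) (k : Fin (m + 1) → ℤ) (α : Fin (m + 1) → Bool) :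
    lvarSum L a k α = ∑ c : Fin 3, ∑ γ : Fin m → Fin 3,
      lvarExpr (m + 1) L a (lvarIndex L k α (Fin.cons c γ)) (lvarPattern α (Fin.cons c γ)) := by
  rw [lvarSum, ← Fintype.sum_prod_type']
  exact (Fintype.sum_equiv (Fin.consEquiv fun _ => Fin 3) _ _ fun _ => rfl).symm

end Estimates

section InductionStep

variable {m L : ℕ} {a : (Fin (m + 1) → ℤ) → ℂ} {k : Fin (m + 1) → ℤ} {α : Fin (m + 1) → Bool}

lemma lvarSum_sliceAt_le (c : Fin 3) (hc : (α 0 && decide (c = 0)) = false) {ν : ℤ}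
    (hν : ν ∈ DzL (if α 0 ∧ c = 2 then nextDyadicIndex L (k 0) else k 0) L) :
    lvarSum L (sliceAt a ν) (Fin.tail k) (Fin.tail α) ≤ ∑ γ : Fin m → Fin 3,
      lvarExpr (m + 1) L a (lvarIndex L k α (Fin.cons c γ)) (lvarPattern α (Fin.cons c γ)) :=
  sum_le_sum fun γ _ => by
    rw [lvarExpr_succ_of_false a _ hc]
    exact le_sSup_image_finset (f := fun μ => lvarExpr m L (sliceAt a μ) _ _) hν

lemma sum_lvarExpr_cons_zero_of_true (hα : α 0 = true) :
    ∑ γ : Fin m → Fin 3,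
      lvarExpr (m + 1) L a (lvarIndex L k α (Fin.cons 0 γ)) (lvarPattern α (Fin.cons 0 γ))
      = ∑ ν ∈ dropMax (DzL (k 0) L),
          lvarSum L (sliceAt a (ν + 1) - sliceAt a ν) (Fin.tail k) (Fin.tail α) := by
  simp only [lvarSum]
  rw [sum_comm]
  refine sum_congr rfl fun γ _ => ?_
  have hk : lvarIndex L k α (Fin.cons 0 γ) 0 = k 0 := by simp [lvarIndex]
  rw [lvarExpr_succ_of_true a _ (by simp [lvarPattern, hα]), hk]
  rfl

variable (ih : ∀ b : (Fin m → ℤ) → ℂ, IsPeriodic2L L b →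
  ∀ k α, varExpr m L b k α ≤ lvarSum L b k α)
include ih

lemma varExpr_le_lvarSum_succ_of_false (ha : IsPeriodic2L L a) (hα : α 0 = false) :
    varExpr (m + 1) L a k α ≤ lvarSum L a k α := by
  have hT0 : ∑ γ : Fin m → Fin 3,
      lvarExpr (m + 1) L a (lvarIndex L k α (Fin.cons 0 γ)) (lvarPattern α (Fin.cons 0 γ))
      ≤ lvarSum L a k α := by
    rw [lvarSum_succ, Fin.sum_univ_three, add_assoc]
    exact le_add_of_nonneg_right <| add_nonneg (sum_nonneg fun _ _ => lvarExpr_nonneg _ _ _)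
      (sum_nonneg fun _ _ => lvarExpr_nonneg _ _ _)
  rw [varExpr_succ_of_false a k hα]
  refine Real.sSup_le ?_ (lvarSum_nonneg _ _ _)
  rintro _ ⟨ν, hν, rfl⟩
  exact (ih _ (ha.sliceAt ν) _ _).trans
    ((lvarSum_sliceAt_le 0 (by simp [hα]) (by simpa [hα] using hν)).trans hT0)

lemma varExpr_le_lvarSum_succ_of_true (ha : IsPeriodic2L L a) (hα : α 0 = true) :
    varExpr (m + 1) L a k α ≤ lvarSum L a k α := by
  rw [varExpr_succ_of_true a k hα]
  obtain hs | hs := (DzL (k 0) L).eq_empty_or_nonempty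
  · rw [hs, sum_empty]
    exact lvarSum_nonneg _ _ _
  set μ := (DzL (k 0) L).max' hs
  have hμ : μ ∈ DzL (k 0) L := max'_mem _ hs
  rw [← sum_erase_add _ _ hμ, ← dropMax_eq_erase hs, lvarSum_succ, Fin.sum_univ_three,
    sum_lvarExpr_cons_zero_of_true hα, add_assoc]
  gcongr with ν
  · exact ih _ ((ha.sliceAt _).sub (ha.sliceAt _)) _ _
  refine (varExpr_sub_le _ _ _ _).trans ?_
  rw [add_comm, ← ha.sliceAt_shiftIntoIL (μ + 1)]
  gcongr
  · exact (ih _ (ha.sliceAt _) _ _).trans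
      (lvarSum_sliceAt_le 1 (by simp) (by simpa using hμ))
  · exact (ih _ (ha.sliceAt _) _ _).trans
      (lvarSum_sliceAt_le 2 (by simp) (by simpa [hα] using shiftIntoIL_max'_add_one_mem_DzL hs))

end InductionStep

lemma varExpr_le_lvarSum {m L : ℕ} {a : (Fin m → ℤ) → ℂ} (ha : IsPeriodic2L L a)
    (k : Fin m → ℤ) (α : Fin m → Bool) : varExpr m L a k α ≤ lvarSum L a k α := by
  induction m with
  | zero =>
    rw [lvarSum, Fintype.sum_unique]
    exact le_of_eq (congrArg (fun β => ‖mixedDiff 0 β a Fin.elim0‖) (Subsingleton.elim _ _))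
  | succ m ih =>
    cases hα : α 0
    · exact varExpr_le_lvarSum_succ_of_false (fun b hb => ih hb) ha hα
    · exact varExpr_le_lvarSum_succ_of_true (fun b hb => ih hb) ha hα

theorem var_le_of_lvar_le_general (d L : ℕ)
    (a : (Fin d → ℤ) → ℂ)
    (hper : ∀ (k : Fin d → ℤ) (i : Fin d), a (k + (2*L) • Pi.single i 1) = a k)
    (M : ℝ)
    (hlvar : ∀ (k : Fin d → ℤ) (α : Fin d → Bool), lvarExpr d L a k α ≤ M) :
    ∀ (k : Fin d → ℤ) (α : Fin d → Bool), varExpr d L a k α ≤ 4 ^ d * M := by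
  intro k α
  have hM : 0 ≤ M := (lvarExpr_nonneg a k α).trans (hlvar k α)
  calc varExpr d L a k α ≤ lvarSum L a k α := varExpr_le_lvarSum hper k α
    _ ≤ ∑ _γ : Fin d → Fin 3, M := sum_le_sum fun γ _ => hlvar _ _
    _ = 3 ^ d * M := by simp
    _ ≤ 4 ^ d * M := by gcongr; norm_num

/-- **From local variations to total variations.**  If `lvar(a,k) ≤ M` for
every `k`, then `var(a) ≤ 4^d M`, i.e. every defining term of the total
variation is at most `4^d M`. -/
theorem var_le_of_lvar_le (d L : ℕ) (hL : 1 ≤ L)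
    (a : (Fin d → ℤ) → ℂ)
    (hper : ∀ (k : Fin d → ℤ) (i : Fin d), a (k + (2*L) • Pi.single i 1) = a k)
    (M : ℝ) (hM : 0 < M)
    (hlvar : ∀ (k : Fin d → ℤ) (α : Fin d → Bool), lvarExpr d L a k α ≤ M) :
    ∀ (k : Fin d → ℤ) (α : Fin d → Bool), varExpr d L a k α ≤ 4 ^ d * M :=
  var_le_of_lvar_le_general d L a hper M hlvar
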